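/- Let 𝒜 be a gST-automaton without silent transitions in which no transition enters an initial state or leaves an accepting state, and let c be a bad starter transition of dimension n. Then the gST-automaton 𝒜_c satisfies: (1) L(𝒜_c) = L(𝒜); (2) bst_n(𝒜_c) = bst_n(𝒜) − 1; (3) bst_k(𝒜_c) = bst_k(𝒜) for all k < n; (4) btt_k(𝒜_c) = btt_k(𝒜) for all k. -/

import Mathlib

open scoped Classical

namespace HDA

/-! ### Ipomsets over a fixed alphabet -/

structure PreIpomset (σ : Type) : Type 1 where
  carrier : Type
  fin : Finite carrier
  lt : carrier → carrier → Prop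
  evord : carrier → carrier → Prop
  S : Set carrier
  T : Set carrier
  lab : carrier → σ

namespace PreIpomset

variable {σ : Type}

/-- The precedence order is empty. -/
def Discrete (P : PreIpomset σ) : Prop := ∀ x y, ¬ P.lt x y

/-- Validity: `lt` is a strict partial order which is an interval order, `evord` is acyclic,
for distinct events exactly one of the four relations holds, sources are minimal and
targets are maximal.  (All ipomsets considered are interval.) -/
structure IsIpomset (P : PreIpomset σ) : Prop where
  lt_trans : ∀ x y z, P.lt x y → P.lt y z → P.lt x z
  lt_irrefl : ∀ x, ¬ P.lt x x
  evord_acyclic : ∀ x, ¬ Relation.TransGen P.evord x x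
  total : ∀ x y : P.carrier, x ≠ y → P.lt x y ∨ P.lt y x ∨ P.evord x y ∨ P.evord y x
  lt_not_evord : ∀ x y, P.lt x y → ¬ P.evord x y ∧ ¬ P.evord y x
  src_min : ∀ x ∈ P.S, ∀ y, ¬ P.lt y x
  tgt_max : ∀ x ∈ P.T, ∀ y, ¬ P.lt x y
  interval : ∀ w x y z, P.lt w x → P.lt y z → P.lt w z ∨ P.lt y x

/-- A conclist: a discrete ipomset with empty interfaces. -/
def IsConclist (P : PreIpomset σ) : Prop :=
  P.IsIpomset ∧ P.Discrete ∧ P.S = ∅ ∧ P.T = ∅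

/-- A starter `⟨U∖A,U,U⟩`. -/
def IsStarter (P : PreIpomset σ) : Prop := P.IsIpomset ∧ P.Discrete ∧ P.T = Set.univ

/-- A terminator `⟨U,U,U∖B⟩`. -/
def IsTerminator (P : PreIpomset σ) : Prop := P.IsIpomset ∧ P.Discrete ∧ P.S = Set.univ

/-- An identity `⟨U,U,U⟩`. -/
def IsIdentityIpomset (P : PreIpomset σ) : Prop :=
  P.IsIpomset ∧ P.Discrete ∧ P.S = Set.univ ∧ P.T = Set.univ

def IsProperStarter (P : PreIpomset σ) : Prop := P.IsStarter ∧ P.S ≠ Set.univ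

def IsProperTerminator (P : PreIpomset σ) : Prop := P.IsTerminator ∧ P.T ≠ Set.univ

/-- Isomorphism of (pre)ipomsets. -/
def Iso (P Q : PreIpomset σ) : Prop :=
  ∃ f : P.carrier ≃ Q.carrier,
    (∀ x y, P.lt x y ↔ Q.lt (f x) (f y)) ∧
    (∀ x y, P.evord x y ↔ Q.evord (f x) (f y)) ∧
    (∀ x, x ∈ P.S ↔ f x ∈ Q.S) ∧
    (∀ x, x ∈ P.T ↔ f x ∈ Q.T) ∧
    (∀ x, Q.lab (f x) = P.lab x)

/-- Restriction to a subset of events, with empty interfaces. -/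
def restrict (P : PreIpomset σ) (K : Set P.carrier) : PreIpomset σ where
  carrier := {x : P.carrier // x ∈ K}
  fin := by haveI := P.fin; exact inferInstance
  lt := fun x y => P.lt x.val y.val
  evord := fun x y => P.evord x.val y.val
  S := ∅
  T := ∅
  lab := fun x => P.lab x.val

/-- The source interface of `P` as a conclist. -/
def srcIface (P : PreIpomset σ) : PreIpomset σ := P.restrict P.S

/-- The target interface of `P` as a conclist. -/
def tgtIface (P : PreIpomset σ) : PreIpomset σ := P.restrict P.T

/-- The underlying conclist (forget interfaces). -/
def conclistOf (P : PreIpomset σ) : PreIpomset σ := { P with S := ∅, T := ∅ }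

/-- The identity ipomset `⟨U,U,U⟩` on the conclist underlying `P`. -/
def idOf (P : PreIpomset σ) : PreIpomset σ := { P with S := Set.univ, T := Set.univ }

/-- The discrete ipomset `⟨S,U,T⟩` on the conclist underlying `P`. -/
def withIfaces (P : PreIpomset σ) (S T : Set P.carrier) : PreIpomset σ :=
  { P with S := S, T := T }

/-- The starter `⟨U∖A,U,U⟩` on the conclist underlying `P`. -/
def starter (P : PreIpomset σ) (A : Set P.carrier) : PreIpomset σ :=
  { P with S := Aᶜ, T := Set.univ }

/-- The terminator `⟨U,U,U∖B⟩` on the conclist underlying `P`. -/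
def terminator (P : PreIpomset σ) (B : Set P.carrier) : PreIpomset σ :=
  { P with S := Set.univ, T := Bᶜ }

/-- A matching `T_P ≅ S_Q`, i.e. an isomorphism of interface conclists
along which `P` and `Q` may be glued. -/
structure Matching (P Q : PreIpomset σ) : Type where
  g : {x : P.carrier // x ∈ P.T} ≃ {y : Q.carrier // y ∈ Q.S}
  evord_iff : ∀ x y, P.evord x.val y.val ↔ Q.evord (g x).val (g y).val
  lab_eq : ∀ x, Q.lab (g x).val = P.lab x.val

def gluePOf (P Q : PreIpomset σ) :
    P.carrier ⊕ {y : Q.carrier // y ∉ Q.S} → Option P.carrier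
  | Sum.inl x => some x
  | Sum.inr _ => none

noncomputable def glueQOf (P Q : PreIpomset σ) (m : Matching P Q) :
    P.carrier ⊕ {y : Q.carrier // y ∉ Q.S} → Option Q.carrier
  | Sum.inl x => if h : x ∈ P.T then some (m.g ⟨x, h⟩).val else none
  | Sum.inr y => some y.val

/-- The gluing `P * Q` along a matching `T_P ≅ S_Q`. -/
noncomputable def glue (P Q : PreIpomset σ) (m : Matching P Q) : PreIpomset σ where
  carrier := P.carrier ⊕ {y : Q.carrier // y ∉ Q.S}
  fin := by haveI := P.fin; haveI := Q.fin; exact inferInstance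
  lt := fun u v =>
    (∃ x x', gluePOf P Q u = some x ∧ gluePOf P Q v = some x' ∧ P.lt x x') ∨
    (∃ y y', glueQOf P Q m u = some y ∧ glueQOf P Q m v = some y' ∧ Q.lt y y') ∨
    ((∃ x, gluePOf P Q u = some x ∧ x ∉ P.T) ∧
     (∃ y, glueQOf P Q m v = some y ∧ y ∉ Q.S))
  evord := fun u v =>
    (∃ x x', gluePOf P Q u = some x ∧ gluePOf P Q v = some x' ∧ P.evord x x') ∨
    (∃ y y', glueQOf P Q m u = some y ∧ glueQOf P Q m v = some y' ∧ Q.evord y y')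
  S := {u | ∃ x, gluePOf P Q u = some x ∧ x ∈ P.S}
  T := {u | ∃ y, glueQOf P Q m u = some y ∧ y ∈ Q.T}
  lab := Sum.elim P.lab fun y => Q.lab y.val

/-- `R` is (isomorphic to) the gluing `P * Q`; in particular `T_P ≅ S_Q`. -/
def GlueRel (P Q R : PreIpomset σ) : Prop :=
  ∃ m : Matching P Q, Iso (glue P Q m) R

/-- A choice of gluing (used when a matching is known to exist). -/
noncomputable def glueChoice (P Q : PreIpomset σ) : PreIpomset σ :=
  if h : Nonempty (Matching P Q) then glue P Q h.some else P

/-- `GluesTo l R`: `R` is the gluing of the nonempty list `l` of ipomsets. -/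
inductive GluesTo : List (PreIpomset σ) → PreIpomset σ → Prop
  | single {P R : PreIpomset σ} : Iso P R → GluesTo [P] R
  | cons {P : PreIpomset σ} {l : List (PreIpomset σ)} {R' R : PreIpomset σ} :
      GluesTo l R' → GlueRel P R' R → GluesTo (P :: l) R

/-- Proper starters and proper terminators alternate. -/
def Alternating (l : List (PreIpomset σ)) : Prop :=
  l.Chain' fun P Q => (IsProperStarter P ∧ IsProperTerminator Q) ∨
    (IsProperTerminator P ∧ IsProperStarter Q)

/-- `l` is a sparse step decomposition of `R`: either a single identity, or an
alternating sequence of proper starters and proper terminators gluing to `R`. -/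
def IsSparseDecomp (l : List (PreIpomset σ)) (R : PreIpomset σ) : Prop :=
  GluesTo l R ∧
  ((∃ I, l = [I] ∧ IsIdentityIpomset I) ∨
   ((∀ P ∈ l, IsProperStarter P ∨ IsProperTerminator P) ∧ Alternating l))

/-- `P ∈ iPoms^q`: the sparse step decomposition of `P` does not end with a
proper starter (i.e. it ends with a terminator or is a single identity). -/
def InQ (P : PreIpomset σ) : Prop :=
  ∃ l, IsSparseDecomp l P ∧ ∀ Q, l.getLast? = some Q → ¬ IsProperStarter Q

end PreIpomset

open PreIpomset

variable {σ : Type}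

/-! ### Languages and rational operations -/

def glueLang (L M : Set (PreIpomset σ)) : Set (PreIpomset σ) :=
  {R | ∃ P ∈ L, ∃ Q ∈ M, GlueRel P Q R}

def powLang (L : Set (PreIpomset σ)) : ℕ → Set (PreIpomset σ)
  | 0 => L
  | n + 1 => glueLang L (powLang L n)

/-- `L⁺ = ⋃_{n ≥ 1} Lⁿ`. -/
def plusLang (L : Set (PreIpomset σ)) : Set (PreIpomset σ) := ⋃ n, powLang L n

/-- Rational languages of (interval) ipomsets: generated from `∅` and singletons
(up to isomorphism) of starters and terminators by union, gluing composition and plus. -/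
inductive Rational : Set (PreIpomset σ) → Prop
  | empty : Rational ∅
  | single {P : PreIpomset σ} : IsStarter P ∨ IsTerminator P → Rational {Q | Iso Q P}
  | union {L M : Set (PreIpomset σ)} : Rational L → Rational M → Rational (L ∪ M)
  | concat {L M : Set (PreIpomset σ)} : Rational L → Rational M → Rational (glueLang L M)
  | plus {L : Set (PreIpomset σ)} : Rational L → Rational (plusLang L)

/-! ### P-automata -/

structure PAutomaton (σ : Type) : Type 1 where
  Q : Type
  E : Type
  src : E → Q
  tgt : E → Q
  lab : E → PreIpomset σ
  mu : Q → PreIpomset σ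
  start : Set Q
  accept : Set Q

namespace PAutomaton

variable {σ : Type}

/-- The axioms of a P-automaton: finite sets of states and transitions, states
labelled by conclists, transitions by interval ipomsets, with
`μ(s(e)) ≅ S_{λ(e)}` and `μ(t(e)) ≅ T_{λ(e)}`. -/
def IsPA (A : PAutomaton σ) : Prop :=
  Finite A.Q ∧ Finite A.E ∧
  (∀ q, (A.mu q).IsConclist) ∧ (∀ e, (A.lab e).IsIpomset) ∧
  (∀ e, Iso (A.lab e).srcIface (A.mu (A.src e))) ∧
  (∀ e, Iso (A.lab e).tgtIface (A.mu (A.tgt e)))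

/-- ST-automaton: every label is a starter or a terminator. -/
def IsST (A : PAutomaton σ) : Prop := ∀ e, IsStarter (A.lab e) ∨ IsTerminator (A.lab e)

/-- gST-automaton: every label is discrete. -/
def IsGST (A : PAutomaton σ) : Prop := ∀ e, (A.lab e).Discrete

/-- No transition is labelled by an identity. -/
def NoSilent (A : PAutomaton σ) : Prop := ∀ e, ¬ IsIdentityIpomset (A.lab e)

/-- A reduced gST-automaton: no silent transitions and conditions (a)–(f). -/
def Reduced (A : PAutomaton σ) : Prop :=
  NoSilent A ∧
  (∀ e, A.tgt e ∉ A.start) ∧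
  (∀ e, A.src e ∉ A.accept) ∧
  (∀ e, (A.lab e).T = Set.univ → A.tgt e ∈ A.accept) ∧
  (∀ e, (A.lab e).S = Set.univ → A.src e ∈ A.start) ∧
  (∀ e e', A.src e ∈ A.start → A.src e' = A.src e → e' = e) ∧
  (∀ e e', A.tgt e ∈ A.accept → A.tgt e' = A.tgt e → e' = e)

/-- Paths in a P-automaton, from a state to a state. -/
inductive Path (A : PAutomaton σ) : A.Q → A.Q → Type
  | nil (q : A.Q) : Path A q q
  | cons (e : A.E) {r : A.Q} (rest : Path A (A.tgt e) r) : Path A (A.src e) r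

/-- The (interval) ipomset recognized by a path, up to isomorphism:
the gluing of the labels of its transitions (an identity for a constant path). -/
inductive Rec {A : PAutomaton σ} : ∀ {p r : A.Q}, Path A p r → PreIpomset σ → Prop
  | nil (q : A.Q) (R : PreIpomset σ) : Iso (A.mu q).idOf R → Rec (Path.nil q) R
  | cons (e : A.E) {r : A.Q} (rest : Path A (A.tgt e) r) {R' R : PreIpomset σ} :
      Rec rest R' → GlueRel (A.lab e) R' R → Rec (Path.cons e rest) R

/-- The language of a P-automaton. -/
def lang (A : PAutomaton σ) : Set (PreIpomset σ) :=
  {R | ∃ p r, ∃ α : Path A p r, p ∈ A.start ∧ r ∈ A.accept ∧ Rec α R}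

/-- Dimension of a transition. -/
noncomputable def dim (A : PAutomaton σ) (e : A.E) : ℕ := Nat.card (A.lab e).carrier

/-- Number of bad starter transitions of dimension `n`. -/
noncomputable def bst (A : PAutomaton σ) (n : ℕ) : ℕ :=
  Nat.card {e : A.E // IsProperStarter (A.lab e) ∧ A.tgt e ∉ A.accept ∧ A.dim e = n}

/-- Number of bad terminator transitions of dimension `n`. -/
noncomputable def btt (A : PAutomaton σ) (n : ℕ) : ℕ :=
  Nat.card {e : A.E // IsProperTerminator (A.lab e) ∧ A.src e ∉ A.start ∧ A.dim e = n}

/-- The automaton `𝒜_c`: remove the starter transition `c`; for every transition `e`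
out of `t(c)` add a transition `e*` from `s(c)` to `t(e)` labelled `λ(c) * λ(e)`. -/
noncomputable def Ac (A : PAutomaton σ) (c : A.E) : PAutomaton σ where
  Q := A.Q
  E := {e : A.E // e ≠ c} ⊕ {e : A.E // A.src e = A.tgt c}
  src := Sum.elim (fun e => A.src e.val) fun _ => A.src c
  tgt := Sum.elim (fun e => A.tgt e.val) fun e => A.tgt e.val
  lab := Sum.elim (fun e => A.lab e.val) fun e => glueChoice (A.lab c) (A.lab e.val)
  mu := A.mu
  start := A.start
  accept := A.accept

/-- Disjoint union of two P-automata. -/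
def sumAut (A B : PAutomaton σ) : PAutomaton σ where
  Q := A.Q ⊕ B.Q
  E := A.E ⊕ B.E
  src := Sum.elim (Sum.inl ∘ A.src) (Sum.inr ∘ B.src)
  tgt := Sum.elim (Sum.inl ∘ A.tgt) (Sum.inr ∘ B.tgt)
  lab := Sum.elim A.lab B.lab
  mu := Sum.elim A.mu B.mu
  start := Sum.inl '' A.start ∪ Sum.inr '' B.start
  accept := Sum.inl '' A.accept ∪ Sum.inr '' B.accept

/-- Concatenation `𝒜 * ℬ`: disjoint union together with identity-labelled transitions
from accepting states of `𝒜` to initial states of `ℬ` with isomorphic state labels. -/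
def concatAut (A B : PAutomaton σ) : PAutomaton σ where
  Q := A.Q ⊕ B.Q
  E := A.E ⊕ B.E ⊕
    {pq : A.Q × B.Q // pq.1 ∈ A.accept ∧ pq.2 ∈ B.start ∧ Iso (A.mu pq.1) (B.mu pq.2)}
  src := Sum.elim (Sum.inl ∘ A.src)
    (Sum.elim (Sum.inr ∘ B.src) fun pq => Sum.inl pq.val.1)
  tgt := Sum.elim (Sum.inl ∘ A.tgt)
    (Sum.elim (Sum.inr ∘ B.tgt) fun pq => Sum.inr pq.val.2)
  lab := Sum.elim A.lab (Sum.elim B.lab fun pq => (A.mu pq.val.1).idOf)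
  mu := Sum.elim A.mu B.mu
  start := Sum.inl '' A.start
  accept := Sum.inr '' B.accept

/-- Kleene plus `𝒜⁺`: add identity-labelled transitions from accepting states
to initial states with isomorphic state labels. -/
def plusAut (A : PAutomaton σ) : PAutomaton σ where
  Q := A.Q
  E := A.E ⊕
    {pq : A.Q × A.Q // pq.1 ∈ A.accept ∧ pq.2 ∈ A.start ∧ Iso (A.mu pq.1) (A.mu pq.2)}
  src := Sum.elim A.src fun pq => pq.val.1
  tgt := Sum.elim A.tgt fun pq => pq.val.2
  lab := Sum.elim A.lab fun pq => (A.mu pq.val.1).idOf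
  mu := A.mu
  start := A.start
  accept := A.accept

end PAutomaton

/-! ### Partial HDAs -/

/-- `g` exhibits `V` as the sub-conclist of `U` obtained by removing the events in `K`. -/
def IsFaceEmbed (U : PreIpomset σ) (K : Set U.carrier) (V : PreIpomset σ)
    (g : V.carrier → U.carrier) : Prop :=
  Function.Injective g ∧ Set.range g = Kᶜ ∧
  (∀ u v, V.evord u v ↔ U.evord (g u) (g v)) ∧
  (∀ u, U.lab (g u) = V.lab u)

/-- The data of a partial higher-dimensional automaton: cells labelled by conclists,
partial face maps, initial and accepting cells. -/
structure PrePHDA (σ : Type) : Type 1 where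
  cell : Type
  ev : cell → PreIpomset σ
  face : (x : cell) → Set (ev x).carrier → Set (ev x).carrier → Option cell
  start : Set cell
  accept : Set cell

namespace PrePHDA

variable {σ : Type}

/-- The lax precubical identity: whenever `δ_{A,B}(x)` and `δ_{C,D}(δ_{A,B}(x))` are
defined, `δ_{A∪C,B∪D}(x)` is defined and equal to the composite. -/
def IsLax (X : PrePHDA σ) : Prop :=
  ∀ x (A B : Set (X.ev x).carrier) y, X.face x A B = some y →
    ∀ g, IsFaceEmbed (X.ev x) (A ∪ B) (X.ev y) g →
      ∀ (C D : Set (X.ev y).carrier) z, X.face y C D = some z →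
        X.face x (A ∪ g '' C) (B ∪ g '' D) = some z

/-- The axioms of a partial HDA. -/
def IsPHDA (X : PrePHDA σ) : Prop :=
  (∀ x, (X.ev x).IsConclist) ∧
  (∀ x, X.face x ∅ ∅ = some x) ∧
  (∀ x A B y, X.face x A B = some y →
    Disjoint A B ∧ ∃ g, IsFaceEmbed (X.ev x) (A ∪ B) (X.ev y) g) ∧
  IsLax X

/-- Strictness: `δ_{C,D} ∘ δ_{A,B} = δ_{A∪C,B∪D}` as partial functions. -/
def IsStrict (X : PrePHDA σ) : Prop :=
  IsPHDA X ∧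
  (∀ x (A B : Set (X.ev x).carrier) y, X.face x A B = some y →
    ∀ g, IsFaceEmbed (X.ev x) (A ∪ B) (X.ev y) g →
      ∀ C D : Set (X.ev y).carrier,
        X.face x (A ∪ g '' C) (B ∪ g '' D) = X.face y C D) ∧
  (∀ x (A B C D : Set (X.ev x).carrier),
    Disjoint (A ∪ C) (B ∪ D) → C ∪ D ⊆ (A ∪ B)ᶜ →
    X.face x A B = none → X.face x (A ∪ C) (B ∪ D) = none)

/-- Paths in a partial HDA: sequences of upsteps and downsteps. -/
inductive Path (X : PrePHDA σ) : X.cell → X.cell → Type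
  | nil (x : X.cell) : Path X x x
  | up {x z : X.cell} (y : X.cell) (A : Set (X.ev y).carrier)
      (h : X.face y A ∅ = some x) (rest : Path X y z) : Path X x z
  | down {z w : X.cell} (y : X.cell) (B : Set (X.ev y).carrier)
      (h : X.face y ∅ B = some z) (rest : Path X z w) : Path X y w

/-- Directions of the steps of a path (`true` = upstep). -/
def Path.dirs {X : PrePHDA σ} : {x z : X.cell} → Path X x z → List Bool
  | _, _, .nil _ => []
  | _, _, .up _ _ _ rest => true :: rest.dirs
  | _, _, .down _ _ _ rest => false :: rest.dirs

/-- A path is sparse if upsteps and downsteps alternate. -/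
def Path.Sparse {X : PrePHDA σ} {x z : X.cell} (α : Path X x z) : Prop :=
  α.dirs.Chain' (· ≠ ·)

/-- Concatenation of paths. -/
def Path.comp {X : PrePHDA σ} : {x y z : X.cell} → Path X x y → Path X y z → Path X x z
  | _, _, _, .nil _, β => β
  | _, _, _, .up y A h rest, β => .up y A h (rest.comp β)
  | _, _, _, .down y B h rest, β => .down y B h (rest.comp β)

/-- The ipomset recognized by a path, up to isomorphism: the gluing of the starters
and terminators of its steps (an identity for a constant path). -/
inductive Rec {X : PrePHDA σ} : ∀ {x z : X.cell}, Path X x z → PreIpomset σ → Prop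
  | nil (x : X.cell) (R : PreIpomset σ) :
      Iso (X.ev x).idOf R → Rec (Path.nil x) R
  | up {x z : X.cell} (y : X.cell) (A : Set (X.ev y).carrier)
      (h : X.face y A ∅ = some x) (rest : Path X y z) {R' R : PreIpomset σ} :
      Rec rest R' → GlueRel ((X.ev y).starter A) R' R → Rec (Path.up y A h rest) R
  | down {z w : X.cell} (y : X.cell) (B : Set (X.ev y).carrier)
      (h : X.face y ∅ B = some z) (rest : Path X z w) {R' R : PreIpomset σ} :
      Rec rest R' → GlueRel ((X.ev y).terminator B) R' R → Rec (Path.down y B h rest) R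

/-- The language of a partial HDA. -/
def lang (X : PrePHDA σ) : Set (PreIpomset σ) :=
  {R | ∃ x z, ∃ α : Path X x z, x ∈ X.start ∧ z ∈ X.accept ∧ Rec α R}

/-- `X(K,P)`: cells reachable from `K` by a path recognizing `P`. -/
def track (X : PrePHDA σ) (K : Set X.cell) (P : PreIpomset σ) : Set X.cell :=
  {x | ∃ s, ∃ α : Path X s x, s ∈ K ∧ Rec α P}

/-- Deterministic partial HDA: at most one initial cell per conclist, and lower
face maps are "injective" in the appropriate sense. -/
def Deterministic (X : PrePHDA σ) : Prop :=
  (∀ x y, x ∈ X.start → y ∈ X.start → Iso (X.ev x) (X.ev y) → x = y) ∧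
  (∀ (y y' : X.cell) (A : Set (X.ev y).carrier) (A' : Set (X.ev y').carrier)
      (x : X.cell), X.face y A ∅ = some x → X.face y' A' ∅ = some x →
    (∃ f : (X.ev y).carrier ≃ (X.ev y').carrier,
      (∀ u v, (X.ev y).evord u v ↔ (X.ev y').evord (f u) (f v)) ∧
      (∀ u, (X.ev y').lab (f u) = (X.ev y).lab u) ∧ f '' A = A') → y = y')

end PrePHDA

/-! ### Relational HDAs -/

/-- The data of a relational HDA: face relations instead of partial face maps. -/
structure PreRHDA (σ : Type) : Type 1 where
  cell : Type
  ev : cell → PreIpomset σ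
  face : (x : cell) → Set (ev x).carrier → Set (ev x).carrier → Set cell
  start : Set cell
  accept : Set cell

namespace PreRHDA

variable {σ : Type}

/-- The axioms of a relational HDA, with the lax precubical identity
`δ_{C,D} ∘ δ_{A,B} ⊆ δ_{A∪C,B∪D}`. -/
def IsRHDA (X : PreRHDA σ) : Prop :=
  (∀ x, (X.ev x).IsConclist) ∧
  (∀ x, X.face x ∅ ∅ = {x}) ∧
  (∀ x A B y, y ∈ X.face x A B →
    Disjoint A B ∧ ∃ g, IsFaceEmbed (X.ev x) (A ∪ B) (X.ev y) g) ∧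
  (∀ x (A B : Set (X.ev x).carrier) y, y ∈ X.face x A B →
    ∀ g, IsFaceEmbed (X.ev x) (A ∪ B) (X.ev y) g →
      ∀ (C D : Set (X.ev y).carrier) z, z ∈ X.face y C D →
        z ∈ X.face x (A ∪ g '' C) (B ∪ g '' D))

/-- Paths in a relational HDA. -/
inductive Path (X : PreRHDA σ) : X.cell → X.cell → Type 1
  | nil (x : X.cell) : Path X x x
  | up {x z : X.cell} (y : X.cell) (A : Set (X.ev y).carrier)
      (h : x ∈ X.face y A ∅) (rest : Path X y z) : Path X x z
  | down {z w : X.cell} (y : X.cell) (B : Set (X.ev y).carrier)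
      (h : z ∈ X.face y ∅ B) (rest : Path X z w) : Path X y w

/-- The ipomset recognized by a path in a relational HDA. -/
inductive Rec {X : PreRHDA σ} : ∀ {x z : X.cell}, Path X x z → PreIpomset σ → Prop
  | nil (x : X.cell) (R : PreIpomset σ) :
      Iso (X.ev x).idOf R → Rec (Path.nil x) R
  | up {x z : X.cell} (y : X.cell) (A : Set (X.ev y).carrier)
      (h : x ∈ X.face y A ∅) (rest : Path X y z) {R' R : PreIpomset σ} :
      Rec rest R' → GlueRel ((X.ev y).starter A) R' R → Rec (Path.up y A h rest) R
  | down {z w : X.cell} (y : X.cell) (B : Set (X.ev y).carrier)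
      (h : z ∈ X.face y ∅ B) (rest : Path X z w) {R' R : PreIpomset σ} :
      Rec rest R' → GlueRel ((X.ev y).terminator B) R' R → Rec (Path.down y B h rest) R

/-- The language of a relational HDA. -/
def lang (X : PreRHDA σ) : Set (PreIpomset σ) :=
  {R | ∃ x z, ∃ α : Path X x z, x ∈ X.start ∧ z ∈ X.accept ∧ Rec α R}

/-- The ST-automaton `ST(X)` of a relational HDA `X`: states are cells, transitions
mimic the starting and terminating of events. -/
def stAut (X : PreRHDA σ) : PAutomaton σ where
  Q := X.cell
  E := (Σ q : X.cell, Σ A : Set (X.ev q).carrier, {p : X.cell // p ∈ X.face q A ∅}) ⊕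
       (Σ q : X.cell, Σ B : Set (X.ev q).carrier, {r : X.cell // r ∈ X.face q ∅ B})
  src := Sum.elim (fun t => t.2.2.val) fun t => t.1
  tgt := Sum.elim (fun t => t.1) fun t => t.2.2.val
  lab := Sum.elim (fun t => (X.ev t.1).starter t.2.1) fun t => (X.ev t.1).terminator t.2.1
  mu := X.ev
  start := X.start
  accept := X.accept

end PreRHDA

/-! ### The partial HDA of a reduced gST-automaton -/

open PAutomaton

/-- The cell representing a state `q` in `X(𝒜)`: `q` is merged with a terminator
transition out of it or a starter transition into it, if such exists. -/
noncomputable def cellOfState (A : PAutomaton σ) (q : A.Q) : A.E ⊕ A.Q :=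
  if h : ∃ e, IsTerminator (A.lab e) ∧ A.src e = q then Sum.inl h.choose
  else if h' : ∃ e, IsStarter (A.lab e) ∧ A.tgt e = q then Sum.inl h'.choose
  else Sum.inr q

/-- `X(𝒜)`: cells are `(Q ⊔ E)/∼`, with the only defined (nontrivial) face maps
`δ⁰_{U∖S}([e]) = [s(e)]` and `δ¹_{U∖T}([e]) = [t(e)]` for `λ(e) = ⟨S,U,T⟩`. -/
noncomputable def XofA (A : PAutomaton σ) : PrePHDA σ where
  cell := A.E ⊕ A.Q
  ev := Sum.elim (fun e => (A.lab e).conclistOf) A.mu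
  face := fun x =>
    match x with
    | Sum.inl e => fun As Bs =>
        if As = ∅ ∧ Bs = ∅ then some (Sum.inl e)
        else if As = (A.lab e).Sᶜ ∧ Bs = ∅ then some (cellOfState A (A.src e))
        else if As = ∅ ∧ Bs = (A.lab e).Tᶜ then some (cellOfState A (A.tgt e))
        else none
    | Sum.inr q => fun As Bs =>
        if As = ∅ ∧ Bs = ∅ then some (Sum.inr q) else none
  start := cellOfState A '' A.start
  accept := cellOfState A '' A.accept

end HDA

/-!
Paths of `𝒜_c` become paths of `𝒜` by expanding each new transition `e*` into `c` followed by
`e`. Conversely, `t(c)` is not accepting, so on an accepting path of `𝒜` the transition `c` is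
always followed by some `e`, and the two merge into `e*`. Both directions amount to associativity
of gluing with the starter `λ(c)`: `(λ(c) * λ(e)) * R ≅ λ(c) * (λ(e) * R)`. From right to left
one needs that `λ(c)` is glued to `λ(e) * R` through `λ(e)`; this holds because the event order
on the interface of a discrete ipomset is a finite linear order, so a matching out of it is
unique.

For the counts: a new transition `e*` is never a proper terminator, since its source interface
is that of `λ(c)`, and its dimension is `|λ(e)| ≥ |λ(c)|`. If it were a starter of dimension
`|λ(c)|`, then `λ(e)` would be an identity, i.e. `e` would be silent.
-/

theorem Nat.card_subtype_and_ne_of_not {α : Type*} {p : α → Prop} {a : α} (ha : ¬ p a) :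
    Nat.card {x // p x ∧ x ≠ a} = Nat.card {x // p x} :=
  Nat.card_congr <| Equiv.subtypeEquivRight fun _ =>
    and_iff_left_of_imp fun hx hxa => ha (hxa ▸ hx)

theorem Nat.card_subtype_and_ne {α : Type*} [Finite α] {p : α → Prop} {a : α} (ha : p a) :
    Nat.card {x // p x ∧ x ≠ a} = Nat.card {x // p x} - 1 := by
  have h : {x | p x ∧ x ≠ a} = {x | p x} \ {a} := rfl
  rw [← Set.coe_ofPred, ← Set.coe_ofPred, Nat.card_coe_set_eq, Nat.card_coe_set_eq, h,
    Set.ncard_sdiff_singleton_of_mem (show a ∈ {x | p x} from ha)]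

theorem RelIso.eq_of_isWellOrder {α β : Type*} {r : α → α → Prop} {s : β → β → Prop}
    [IsWellOrder α r] (f g : r ≃r s) : f = g :=
  have := f.symm.toRelEmbedding.isWellOrder
  RelIso.ext fun a => InitialSeg.eq f.toInitialSeg g.toInitialSeg a

namespace HDA

open PreIpomset

namespace PreIpomset

variable {σ : Type}

theorem Iso.refl (P : PreIpomset σ) : Iso P P :=
  ⟨Equiv.refl _, fun _ _ => Iff.rfl, fun _ _ => Iff.rfl, fun _ => Iff.rfl,
   fun _ => Iff.rfl, fun _ => rfl⟩

theorem Iso.symm {P Q : PreIpomset σ} (h : Iso P Q) : Iso Q P := by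
  obtain ⟨f, hlt, hev, hS, hT, hlab⟩ := h
  refine ⟨f.symm, fun x y => ?_, fun x y => ?_, fun x => ?_, fun x => ?_, fun x => ?_⟩
  · simpa using (hlt (f.symm x) (f.symm y)).symm
  · simpa using (hev (f.symm x) (f.symm y)).symm
  · simpa using (hS (f.symm x)).symm
  · simpa using (hT (f.symm x)).symm
  · simpa using (hlab (f.symm x)).symm

theorem Iso.trans {P Q R : PreIpomset σ} (h : Iso P Q) (h' : Iso Q R) : Iso P R := by
  obtain ⟨f, hlt, hev, hS, hT, hlab⟩ := h
  obtain ⟨g, glt, gev, gS, gT, glab⟩ := h'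
  exact ⟨f.trans g, fun x y => (hlt x y).trans (glt _ _), fun x y => (hev x y).trans (gev _ _),
    fun x => (hS x).trans (gS _), fun x => (hT x).trans (gT _), fun x => (glab _).trans (hlab x)⟩

theorem Iso.card_eq {P Q : PreIpomset σ} (h : Iso P Q) :
    Nat.card P.carrier = Nat.card Q.carrier :=
  let ⟨f, _⟩ := h
  Nat.card_congr f

theorem isWellOrder_evord {P : PreIpomset σ} (hP : P.IsIpomset) (hd : P.Discrete) :
    IsWellOrder P.carrier P.evord := by
  have no_cycle : ∀ x y, Relation.TransGen P.evord x y → ¬ P.evord y x :=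
    fun x y hxy hyx => hP.evord_acyclic x (hxy.tail hyx)
  have tri : ∀ x y, P.evord x y ∨ x = y ∨ P.evord y x := by
    intro x y
    by_cases hxy : x = y
    · exact Or.inr (Or.inl hxy)
    rcases hP.total x y hxy with h | h | h | h
    exacts [absurd h (hd x y), absurd h (hd y x), Or.inl h, Or.inr (Or.inr h)]
  have : IsTrans P.carrier P.evord := ⟨fun x y z hxy hyz => by
    rcases tri x z with h | rfl | h
    · exact h
    · exact absurd hyz (no_cycle _ _ (.single hxy))
    · exact absurd h (no_cycle _ _ ((Relation.TransGen.single hxy).tail hyz))⟩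
  have : Std.Irrefl P.evord := ⟨fun x h => hP.evord_acyclic x (.single h)⟩
  have := P.fin
  exact { wf := Finite.wellFounded_of_trans_of_irrefl _
          trichotomous := fun x y h₁ h₂ => ((tri x y).resolve_left h₁).resolve_right h₂ }

theorem eq_of_evord_iff {P : PreIpomset σ} (hP : P.IsIpomset) (hd : P.Discrete)
    {β : Type*} {s : β → β → Prop} (e₁ e₂ : {x // x ∈ P.T} ≃ β)
    (h₁ : ∀ x y, P.evord x.val y.val ↔ s (e₁ x) (e₁ y))
    (h₂ : ∀ x y, P.evord x.val y.val ↔ s (e₂ x) (e₂ y)) :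
    e₁ = e₂ := by
  have := isWellOrder_evord hP hd
  have := RelIso.eq_of_isWellOrder (r := Subrel P.evord (· ∈ P.T))
    ⟨e₁, (h₁ _ _).symm⟩ ⟨e₂, (h₂ _ _).symm⟩
  exact congrArg RelIso.toEquiv this

theorem nonempty_matching_of_iso {P Q U : PreIpomset σ} (hP : Iso P.tgtIface U)
    (hQ : Iso Q.srcIface U) : Nonempty (Matching P Q) := by
  obtain ⟨f, -, hev, -, -, hlab⟩ := hP.trans hQ.symm
  exact ⟨⟨f, hev, fun x => hlab x⟩⟩

theorem S_glue (P Q : PreIpomset σ) (m : Matching P Q) : (glue P Q m).S = Sum.inl '' P.S := by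
  unfold glue
  ext (a | y) <;> simp [gluePOf]

theorem S_glue_ne_univ {P Q : PreIpomset σ} (m : Matching P Q) (hS : P.S ≠ Set.univ) :
    (glue P Q m).S ≠ Set.univ := by
  rw [S_glue]
  intro h
  refine hS (Set.eq_univ_of_forall fun x => ?_)
  obtain ⟨y, hy, hyx⟩ := h ▸ Set.mem_univ (Sum.inl x)
  exact Sum.inl_injective hyx ▸ hy

theorem evord_glue_inl_inl {P Q : PreIpomset σ} (m : Matching P Q) (a b : P.carrier) :
    (glue P Q m).evord (Sum.inl a) (Sum.inl b) ↔ P.evord a b := by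
  unfold glue
  by_cases ha : a ∈ P.T <;> by_cases hb : b ∈ P.T <;>
    simp [gluePOf, glueQOf, ha, hb, ← m.evord_iff]

theorem exists_iso_glue_of_iso_left {P P' Q : PreIpomset σ} (hiso : Iso P P')
    (m : Matching P Q) : ∃ m' : Matching P' Q, Iso (glue P Q m) (glue P' Q m') := by
  obtain ⟨f, hlt, hev, hS, hT, hlab⟩ := hiso
  refine ⟨⟨(f.subtypeEquiv hT).symm.trans m.g, fun x y => ?_, fun x => ?_⟩, ?_⟩
  · simpa [← m.evord_iff] using (hev (f.symm x) (f.symm y)).symm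
  · simpa [m.lab_eq] using (hlab (f.symm x)).symm
  unfold Iso glue
  refine ⟨Equiv.sumCongr f (Equiv.refl _), ?_, ?_, ?_, ?_, ?_⟩
  · rintro (a | y) (b | y') <;> simp [gluePOf, glueQOf, ← hlt, ← hT]
  · rintro (a | y) (b | y') <;> simp [gluePOf, glueQOf, ← hev, ← hT]
  · rintro (a | y) <;> simp [gluePOf, ← hS]
  · rintro (a | y) <;> simp [glueQOf, ← hT]
  · rintro (a | y) <;> simp [hlab]

theorem GlueRel.congr_left {P P' Q R : PreIpomset σ} (hiso : Iso P P') (h : GlueRel P Q R) :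
    GlueRel P' Q R := by
  obtain ⟨m, hm⟩ := h
  obtain ⟨m', hm'⟩ := exists_iso_glue_of_iso_left hiso m
  exact ⟨m', hm'.symm.trans hm⟩

theorem iso_glue_withIfaces_left (Q B : PreIpomset σ) (S₀ : Set Q.carrier)
    (m : Matching (Q.withIfaces S₀ Q.T) B) :
    Iso ((Q.withIfaces S₀ Q.T).glue B m)
      ((Q.glue B ⟨m.g, m.evord_iff, m.lab_eq⟩).withIfaces
        (Sum.inl '' S₀) (Q.glue B ⟨m.g, m.evord_iff, m.lab_eq⟩).T) := by
  unfold Iso glue withIfaces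
  refine ⟨Equiv.refl _, ?_, ?_, ?_, ?_, fun _ => rfl⟩
  · rintro (_ | _) (_ | _) <;> exact Iff.rfl
  · rintro (_ | _) (_ | _) <;> exact Iff.rfl
  · rintro (_ | _) <;> simp [gluePOf]
  · rintro (_ | _) <;> exact Iff.rfl

def Matching.srcImage {P Q : PreIpomset σ} (m : Matching P Q) : Set Q.carrier :=
  {y | ∃ x : {x // x ∈ P.T}, x.val ∈ P.S ∧ (m.g x).val = y}

noncomputable def glueEquivOfTEqUniv {P Q : PreIpomset σ} (m : Matching P Q)
    (hT : P.T = Set.univ) : (glue P Q m).carrier ≃ Q.carrier :=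
  (((Equiv.subtypeUnivEquiv fun x => hT ▸ Set.mem_univ x).symm.trans m.g).sumCongr
    (Equiv.refl _)).trans (Equiv.sumCompl (· ∈ Q.S))

theorem card_glue_of_T_eq_univ {P Q : PreIpomset σ} (m : Matching P Q) (hT : P.T = Set.univ) :
    Nat.card (glue P Q m).carrier = Nat.card Q.carrier :=
  Nat.card_congr (glueEquivOfTEqUniv m hT)

theorem card_le_of_matching {P Q : PreIpomset σ} (m : Matching P Q) (hT : P.T = Set.univ) :
    Nat.card P.carrier ≤ Nat.card Q.carrier := by
  have := (glue P Q m).fin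
  rw [← card_glue_of_T_eq_univ m hT]
  exact Nat.card_le_card_of_injective Sum.inl Sum.inl_injective

theorem iso_glue_of_T_eq_univ {P Q : PreIpomset σ} (hd : P.Discrete) (hT : P.T = Set.univ)
    (m : Matching P Q) : Iso (glue P Q m) (Q.withIfaces m.srcImage Q.T) := by
  have hTmem : ∀ x, x ∈ P.T := fun x => hT ▸ Set.mem_univ x
  have hlt : ∀ x y, ¬ P.lt x y := hd
  have hev : ∀ x y, P.evord x y ↔ Q.evord (m.g ⟨x, hTmem x⟩) (m.g ⟨y, hTmem y⟩) :=
    fun x y => m.evord_iff ⟨x, hTmem x⟩ ⟨y, hTmem y⟩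
  have hinj : ∀ x y, (m.g ⟨x, hTmem x⟩ : Q.carrier) = m.g ⟨y, hTmem y⟩ ↔ x = y := by
    simp [← Subtype.ext_iff]
  have hnew : ∀ x (y : {y // y ∉ Q.S}), (m.g ⟨x, hTmem x⟩ : Q.carrier) ≠ y :=
    fun x y h => y.2 (h ▸ (m.g _).2)
  unfold Iso glue withIfaces
  refine ⟨glueEquivOfTEqUniv m hT, ?_, ?_, ?_, ?_, ?_⟩
  · rintro (a | y) (b | y') <;> simp [glueEquivOfTEqUniv, gluePOf, glueQOf, hlt, hTmem]
  · rintro (a | y) (b | y') <;> simp [glueEquivOfTEqUniv, gluePOf, glueQOf, hTmem, hev]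
  · rintro (a | y) <;>
      simp [glueEquivOfTEqUniv, gluePOf, Matching.srcImage, hTmem, hinj, hnew]
  · rintro (a | y) <;> simp [glueEquivOfTEqUniv, glueQOf, hTmem]
  · rintro (a | y) <;> simp [glueEquivOfTEqUniv, m.lab_eq]

theorem isIdentityIpomset_of_T_glue_eq_univ {P Q : PreIpomset σ} (hd : P.Discrete)
    (hT : P.T = Set.univ) (m : Matching P Q) (hQ : Q.IsIpomset) (hQd : Q.Discrete)
    (hgT : (glue P Q m).T = Set.univ) (hcard : Nat.card Q.carrier = Nat.card P.carrier) :
    Q.IsIdentityIpomset := by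
  refine ⟨hQ, hQd, ?_, ?_⟩
  · have := Q.fin
    rw [Set.eq_univ_iff_ncard, ← Nat.card_coe_set_eq, hcard, Nat.card_congr m.g.symm,
      Nat.card_congr (Equiv.subtypeUnivEquiv fun x => hT ▸ Set.mem_univ x)]
  · obtain ⟨φ, -, -, -, hφT, -⟩ := iso_glue_of_T_eq_univ hd hT m
    refine Set.eq_univ_of_forall fun y => ?_
    exact φ.apply_symm_apply y ▸ (hφT (φ.symm y)).1 (hgT ▸ Set.mem_univ _)

noncomputable def srcEquivGlue (Q B : PreIpomset σ) (m : Matching Q B) :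
    {a // a ∈ Q.S} ≃ {u // u ∈ (glue Q B m).S} :=
  (Equiv.Set.image Sum.inl Q.S Sum.inl_injective).trans (Equiv.setCongr (S_glue Q B m).symm)

@[simp]
theorem coe_srcEquivGlue {Q B : PreIpomset σ} (m : Matching Q B) (a : {a // a ∈ Q.S}) :
    (srcEquivGlue Q B m a : (glue Q B m).carrier) = Sum.inl a.val :=
  rfl

noncomputable def Matching.glueRight {P Q B : PreIpomset σ} (m₀ : Matching P Q)
    (m : Matching Q B) : Matching P (glue Q B m) where
  g := m₀.g.trans (srcEquivGlue Q B m)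
  evord_iff x y := by simpa [evord_glue_inl_inl] using m₀.evord_iff x y
  lab_eq x := m₀.lab_eq x

theorem Matching.srcImage_glueRight {P Q B : PreIpomset σ} (m₀ : Matching P Q)
    (m : Matching Q B) : (m₀.glueRight m).srcImage = Sum.inl '' m₀.srcImage := by
  ext u
  simp only [Matching.srcImage, Matching.glueRight]
  constructor
  · rintro ⟨x, hx, rfl⟩
    exact ⟨_, ⟨x, hx, rfl⟩, rfl⟩
  · rintro ⟨_, ⟨x, hx, rfl⟩, rfl⟩
    exact ⟨x, hx, rfl⟩

theorem exists_glueRel_of_glueRel_glue {P Q B R : PreIpomset σ} (hd : P.Discrete)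
    (hT : P.T = Set.univ) (m₀ : Matching P Q) (h : GlueRel (glue P Q m₀) B R) :
    ∃ R', GlueRel Q B R' ∧ GlueRel P R' R := by
  obtain ⟨M, hM⟩ := h.congr_left (iso_glue_of_T_eq_univ hd hT m₀)
  let m : Matching Q B := ⟨M.g, M.evord_iff, M.lab_eq⟩
  refine ⟨glue Q B m, ⟨m, Iso.refl _⟩, m₀.glueRight m, ?_⟩
  have h := iso_glue_of_T_eq_univ hd hT (m₀.glueRight m)
  rw [Matching.srcImage_glueRight] at h
  exact h.trans ((iso_glue_withIfaces_left Q B _ M).symm.trans hM)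

theorem glueRel_glue_of_glueRel {P Q B R' R : PreIpomset σ} (hP : P.IsIpomset)
    (hd : P.Discrete) (hT : P.T = Set.univ) (m₀ : Matching P Q) (h₁ : GlueRel Q B R')
    (h₂ : GlueRel P R' R) : GlueRel (glue P Q m₀) B R := by
  obtain ⟨m, φ, hlt, hev, hS, hT', hlab⟩ := h₁
  obtain ⟨m₃, hm₃⟩ := h₂
  refine GlueRel.congr_left (iso_glue_of_T_eq_univ hd hT m₀).symm ?_
  refine ⟨⟨m.g, m.evord_iff, m.lab_eq⟩, (iso_glue_withIfaces_left Q B _ _).trans ?_⟩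
  refine Iso.trans ?_ ((iso_glue_of_T_eq_univ hd hT m₃).symm.trans hm₃)
  have huniq : (m₀.glueRight m).g.trans (φ.subtypeEquiv hS) = m₃.g :=
    eq_of_evord_iff hP hd _ _ (s := fun u v => R'.evord u.val v.val)
      (fun x y => by simpa [← hev] using (m₀.glueRight m).evord_iff x y) m₃.evord_iff
  refine ⟨φ, hlt, hev, fun u => ?_, hT', hlab⟩
  show u ∈ Sum.inl '' m₀.srcImage ↔ φ u ∈ m₃.srcImage
  rw [← Matching.srcImage_glueRight m₀ m]
  simp only [Matching.srcImage, ← huniq, Equiv.trans_apply, Equiv.subtypeEquiv_apply]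
  exact exists_congr fun x => and_congr_right fun _ => φ.apply_eq_iff_eq.symm

theorem glueRel_glueChoice_iff {P Q B R : PreIpomset σ} (hP : P.IsStarter)
    (hm : Nonempty (Matching P Q)) :
    GlueRel (glueChoice P Q) B R ↔ ∃ R', GlueRel Q B R' ∧ GlueRel P R' R := by
  rw [glueChoice, dif_pos hm]
  exact ⟨exists_glueRel_of_glueRel_glue hP.2.1 hP.2.2 _,
    fun ⟨_, h₁, h₂⟩ => glueRel_glue_of_glueRel hP.1 hP.2.1 hP.2.2 _ h₁ h₂⟩

end PreIpomset

namespace PAutomaton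

variable {σ : Type} {A : PAutomaton σ}

def Recognizes (A : PAutomaton σ) (p r : A.Q) (R : PreIpomset σ) : Prop :=
  ∃ α : Path A p r, Rec α R

theorem Recognizes.nil (q : A.Q) {R : PreIpomset σ} (h : Iso (A.mu q).idOf R) :
    A.Recognizes q q R :=
  ⟨.nil q, .nil q R h⟩

theorem Recognizes.cons (e : A.E) {r : A.Q} {R' R : PreIpomset σ}
    (h : A.Recognizes (A.tgt e) r R') (hg : GlueRel (A.lab e) R' R) :
    A.Recognizes (A.src e) r R :=
  let ⟨α, hα⟩ := h
  ⟨.cons e α, .cons e α hα hg⟩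

section RemoveStarter

variable {c : A.E}

theorem src_ne_tgt_of_isProperStarter (hA : A.IsPA) (hc : IsProperStarter (A.lab c)) :
    A.src c ≠ A.tgt c := by
  intro h
  have hsrc := hA.2.2.2.2.1 c
  rw [h] at hsrc
  have hcard := (hsrc.trans (hA.2.2.2.2.2 c).symm).card_eq
  have := (A.lab c).fin
  apply hc.2
  rw [Set.eq_univ_iff_ncard, ← Nat.card_coe_set_eq]
  exact hcard.trans (Nat.card_congr (Equiv.subtypeUnivEquiv fun x => hc.1.2.2 ▸ Set.mem_univ x))

theorem nonempty_matching_of_src_eq_tgt (hA : A.IsPA) {e : A.E} (he : A.src e = A.tgt c) :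
    Nonempty (Matching (A.lab c) (A.lab e)) :=
  nonempty_matching_of_iso (hA.2.2.2.2.2 c) (he ▸ hA.2.2.2.2.1 e)

theorem exists_lab_Ac_inr_eq_glue (hA : A.IsPA) (b : {e : A.E // A.src e = A.tgt c}) :
    ∃ m, (A.Ac c).lab (.inr b) = glue (A.lab c) (A.lab b.val) m :=
  ⟨_, dif_pos (nonempty_matching_of_src_eq_tgt hA b.2)⟩

theorem Recognizes.of_Ac (hA : A.IsPA) (hc : IsStarter (A.lab c)) {p r : (A.Ac c).Q}
    {R : PreIpomset σ} (h : (A.Ac c).Recognizes p r R) : A.Recognizes p r R := by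
  obtain ⟨α, hα⟩ := h
  induction hα with
  | nil q R h => exact Recognizes.nil (A := A) q h
  | cons E _ _ hg ih =>
    rcases E with e | e
    · exact ih.cons e.val hg
    · obtain ⟨R', h₁, h₂⟩ :=
        (glueRel_glueChoice_iff hc (nonempty_matching_of_src_eq_tgt hA e.2)).1 hg
      have h := ih.cons e.val h₁
      rw [e.2] at h
      exact h.cons c h₂

theorem recognizes_Ac_src_of_glueRel (hA : A.IsPA) (hc : IsProperStarter (A.lab c))
    {q r : (A.Ac c).Q} (hq : q = A.tgt c) (hr : r ≠ q) {R' R : PreIpomset σ}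
    (h : (A.Ac c).Recognizes q r R') (hg : GlueRel (A.lab c) R' R) :
    (A.Ac c).Recognizes (A.src c) r R := by
  obtain ⟨β, hβ⟩ := h
  cases hβ with
  | nil => exact absurd rfl hr
  | cons E β hβ hg' =>
    rcases E with e | e
    · have hglue := (glueRel_glueChoice_iff hc.1 (nonempty_matching_of_src_eq_tgt hA hq)).2
        ⟨_, hg', hg⟩
      exact Recognizes.cons (A := A.Ac c) (.inr ⟨e.val, hq⟩) ⟨β, hβ⟩ hglue
    · exact absurd hq (src_ne_tgt_of_isProperStarter hA hc)

theorem Recognizes.to_Ac (hA : A.IsPA) (hc : IsProperStarter (A.lab c)) {p r : A.Q}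
    {R : PreIpomset σ} (h : A.Recognizes p r R) (hr : r ≠ A.tgt c) :
    (A.Ac c).Recognizes p r R := by
  obtain ⟨α, hα⟩ := h
  induction hα with
  | nil q R h => exact Recognizes.nil (A := A.Ac c) q h
  | cons e _ _ hg ih =>
    by_cases hec : e = c
    · subst hec
      exact recognizes_Ac_src_of_glueRel hA hc rfl hr (ih hr) hg
    · exact Recognizes.cons (A := A.Ac c) (.inl ⟨e, hec⟩) (ih hr) hg

theorem lang_Ac (hA : A.IsPA) (hc : IsProperStarter (A.lab c)) (hbad : A.tgt c ∉ A.accept) :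
    (A.Ac c).lang = A.lang := by
  ext R
  constructor
  · rintro ⟨p, r, α, hp, hr, hα⟩
    obtain ⟨β, hβ⟩ := Recognizes.of_Ac hA hc.1 ⟨α, hα⟩
    exact ⟨p, r, β, hp, hr, hβ⟩
  · rintro ⟨p, r, α, hp, hr, hα⟩
    obtain ⟨β, hβ⟩ := Recognizes.to_Ac hA hc ⟨α, hα⟩ fun h => hbad (h ▸ hr)
    exact ⟨p, r, β, hp, hr, hβ⟩

theorem card_Ac_subtype (ψ : A.E → Prop) (Φ : (A.Ac c).E → Prop)
    (hinl : ∀ a : {e // e ≠ c}, Φ (.inl a) ↔ ψ a.val) (hinr : ∀ b, ¬ Φ (.inr b)) :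
    Nat.card {E // Φ E} = Nat.card {e // ψ e ∧ e ≠ c} := by
  have : IsEmpty {b // Φ (.inr b)} := ⟨fun b => hinr b.1 b.2⟩
  calc Nat.card {E // Φ E} = Nat.card {a : {e // e ≠ c} // ψ a.val} :=
        Nat.card_congr (Equiv.subtypeSum.trans ((Equiv.sumEmpty _ _).trans
          (Equiv.subtypeEquivRight hinl)))
    _ = Nat.card {e // ψ e ∧ e ≠ c} :=
        Nat.card_congr ((Equiv.subtypeSubtypeEquivSubtypeInter _ _).trans
          (Equiv.subtypeEquivRight fun _ => and_comm))

theorem dim_Ac_inr (hA : A.IsPA) (hc : IsStarter (A.lab c))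
    (b : {e : A.E // A.src e = A.tgt c}) : (A.Ac c).dim (.inr b) = A.dim b.val := by
  obtain ⟨m, hm⟩ := exists_lab_Ac_inr_eq_glue hA b
  simp only [dim]
  rw [hm, card_glue_of_T_eq_univ m hc.2.2]

theorem btt_Ac (hA : A.IsPA) (hc : IsProperStarter (A.lab c)) (k : ℕ) :
    (A.Ac c).btt k = A.btt k := by
  refine (card_Ac_subtype
    (fun e => IsProperTerminator (A.lab e) ∧ A.src e ∉ A.start ∧ A.dim e = k) _
    (fun _ => Iff.rfl) fun b hb => ?_).trans
    (Nat.card_subtype_and_ne_of_not fun h => hc.2 h.1.1.2.2)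
  obtain ⟨m, hm⟩ := exists_lab_Ac_inr_eq_glue hA b
  exact S_glue_ne_univ m hc.2 (hm ▸ hb.1.1.2.2)

theorem bst_Ac_of_lt (hA : A.IsPA) (hc : IsProperStarter (A.lab c)) {k : ℕ}
    (hk : k < A.dim c) : (A.Ac c).bst k = A.bst k := by
  refine (card_Ac_subtype
    (fun e => IsProperStarter (A.lab e) ∧ A.tgt e ∉ A.accept ∧ A.dim e = k) _
    (fun _ => Iff.rfl) fun b hb => ?_).trans
    (Nat.card_subtype_and_ne_of_not fun h => by omega)
  obtain ⟨m, -⟩ := exists_lab_Ac_inr_eq_glue hA b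
  have hle : A.dim c ≤ A.dim b.val := card_le_of_matching m hc.1.2.2
  have hdim := hb.2.2
  rw [dim_Ac_inr hA hc.1] at hdim
  omega

theorem bst_Ac_dim (hA : A.IsPA) (hg : A.IsGST) (hns : A.NoSilent)
    (hc : IsProperStarter (A.lab c)) (hbad : A.tgt c ∉ A.accept) :
    (A.Ac c).bst (A.dim c) = A.bst (A.dim c) - 1 := by
  have := hA.2.1
  refine (card_Ac_subtype
    (fun e => IsProperStarter (A.lab e) ∧ A.tgt e ∉ A.accept ∧ A.dim e = A.dim c) _
    (fun _ => Iff.rfl) fun b hb => ?_).trans (Nat.card_subtype_and_ne ⟨hc, hbad, rfl⟩)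
  obtain ⟨m, hm⟩ := exists_lab_Ac_inr_eq_glue hA b
  obtain ⟨⟨⟨-, -, hT⟩, -⟩, -, hdim⟩ := hb
  rw [dim_Ac_inr hA hc.1] at hdim
  rw [hm] at hT
  exact hns b.val (isIdentityIpomset_of_T_glue_eq_univ hc.1.2.1 hc.1.2.2 m
    (hA.2.2.2.1 _) (hg _) hT hdim)

end RemoveStarter

end PAutomaton

theorem remove_bad_starter_general {σ : Type} (A : PAutomaton σ)
    (hA : A.IsPA) (hg : A.IsGST) (hns : A.NoSilent)
    (c : A.E) (hc : IsProperStarter (A.lab c)) (hbad : A.tgt c ∉ A.accept)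
    (n : ℕ) (hn : A.dim c = n) :
    (A.Ac c).lang = A.lang ∧
    (A.Ac c).bst n = A.bst n - 1 ∧
    (∀ k < n, (A.Ac c).bst k = A.bst k) ∧
    (∀ k, (A.Ac c).btt k = A.btt k) := by
  subst hn
  exact ⟨PAutomaton.lang_Ac hA hc hbad, PAutomaton.bst_Ac_dim hA hg hns hc hbad,
    fun _ hk => PAutomaton.bst_Ac_of_lt hA hc hk, PAutomaton.btt_Ac hA hc⟩

/-- Removing a bad starter transition `c` of dimension `n` from a
gST-automaton satisfying (a) and (b) preserves the language, decreases the number of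
bad starter transitions of dimension `n` by one, and does not change the numbers of
bad starter transitions of smaller dimension nor of bad terminator transitions. -/
theorem remove_bad_starter {σ : Type} [Finite σ] (A : PAutomaton σ)
    (hA : A.IsPA) (hg : A.IsGST) (hns : A.NoSilent)
    (ha : ∀ e, A.tgt e ∉ A.start) (hb : ∀ e, A.src e ∉ A.accept)
    (c : A.E) (hc : IsProperStarter (A.lab c)) (hbad : A.tgt c ∉ A.accept)
    (n : ℕ) (hn : A.dim c = n) :
    (A.Ac c).lang = A.lang ∧
    (A.Ac c).bst n = A.bst n - 1 ∧
    (∀ k < n, (A.Ac c).bst k = A.bst k) ∧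
    (∀ k, (A.Ac c).btt k = A.btt k) :=
  remove_bad_starter_general A hA hg hns c hc hbad n hn

end HDA
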